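/- Let X be a real random variable (d = 1) whose distribution P_X has a unimodal pdf f_X, i.e., there is a mode m ∈ ℝ such that f_X is non-decreasing on (−∞, m] and non-increasing on [m, ∞). Then for every integer M ≥ 2, the high-noise Ziv–Zakai functionals do not improve with M: V̄(P_X, M) = V̄(P_X, 2) and V(P_X, M) = V(P_X, 2). -/

import Mathlib

open MeasureTheory ProbabilityTheory ENNReal

noncomputable section

variable {d : ℕ} {𝒴 : Type*} [MeasurableSpace 𝒴]

/-- Law of `X - u` when `X ∼ P`, scalar case. -/
def shiftLaw1 (P : Measure ℝ) (u : ℝ) : Measure ℝ :=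
  P.map (· - u)

/-- The mixture measure `μ_U = ∑_k P_{X-u_k}`, scalar case. -/
def mixMeasure1 (P : Measure ℝ) {M : ℕ} (U : Fin M → ℝ) : Measure ℝ :=
  ∑ k : Fin M, shiftLaw1 P (U k)

/-- `H(P_X,t,M)` in the scalar case, where the constraint forces `u_k = kt`:
`∫ max_j (dP_{X−jt}/dμ_U) dμ_U`. -/
def Hfun1 (P : Measure ℝ) (M : ℕ) (t : ℝ) : ℝ≥0∞ :=
  ∫⁻ x, (⨆ j : Fin M,
      (shiftLaw1 P ((j : ℝ) * t)).rnDeriv (mixMeasure1 P fun k : Fin M => (k : ℝ) * t) x)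
    ∂(mixMeasure1 P fun k : Fin M => (k : ℝ) * t)

/-- High-noise Ziv–Zakai functional with valley-filling, scalar case. -/
def Vbar1 (P : Measure ℝ) (M : ℕ) : ℝ≥0∞ :=
  ∫⁻ t in Set.Ioi (0 : ℝ),
    ENNReal.ofReal (t / 2) *
      ⨆ (u : ℝ) (_ : t ≤ u), ((M : ℝ≥0∞) - Hfun1 P M u) / ((M : ℝ≥0∞) - 1)

/-- High-noise Ziv–Zakai functional without valley-filling, scalar case. -/
def V1 (P : Measure ℝ) (M : ℕ) : ℝ≥0∞ :=
  ∫⁻ t in Set.Ioi (0 : ℝ),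
    ENNReal.ofReal (t / 2) * (((M : ℝ≥0∞) - Hfun1 P M t) / ((M : ℝ≥0∞) - 1))

/-!
With `g` the density of `P`, the likelihood ratios against the mixture are
`g (x + j t) / ∑ₖ g (x + k t)`, so `Hfun1 P M t = ∫ maxⱼ g (x + j t) dx`. For unimodal `g` every
sequence `j ↦ g (x + j t)` is unimodal, and the sum of a unimodal sequence is its maximum plus the
minima of consecutive terms. Integrating, with translation invariance of Lebesgue measure,
`M - Hfun1 P M t = (M - 1) ∫ min (g x) (g (x + t)) dx`, so the normalised quantity inside both
functionals does not depend on `M`.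
-/

open Finset Set

section Quasiconcave

variable {𝕜 β : Type*} [Field 𝕜] [LinearOrder 𝕜] [IsStrictOrderedRing 𝕜] [LinearOrder β]
  {f : 𝕜 → β}

theorem quasiconcaveOn_univ_of_monotoneOn_Iic_of_antitoneOn_Ici {m : 𝕜}
    (hmono : MonotoneOn f (Iic m)) (hanti : AntitoneOn f (Ici m)) : QuasiconcaveOn 𝕜 univ f := by
  refine convex_univ.quasiconcaveOn_of_convex_ge fun r ↦ convex_iff_ordConnected.2
    ⟨fun x (hx : r ≤ f x) z (hz : r ≤ f z) w ⟨hxw, hwz⟩ ↦ ?_⟩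
  rcases le_total w m with hwm | hmw
  · exact hx.trans (hmono (hxw.trans hwm) hwm hxw)
  · exact hz.trans (hanti hmw (hmw.trans hwz) hwz)

theorem QuasiconcaveOn.min_le_of_le_of_le (hf : QuasiconcaveOn 𝕜 univ f) {x w z : 𝕜}
    (hxw : x ≤ w) (hwz : w ≤ z) : min (f x) (f z) ≤ f w := by
  have hconv := convex_iff_ordConnected.1 (hf (min (f x) (f z)))
  exact (hconv.out ⟨mem_univ x, min_le_left _ _⟩ ⟨mem_univ z, min_le_right _ _⟩ ⟨hxw, hwz⟩).2

end Quasiconcave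

theorem QuasiconcaveOn.min_le_add_mul {β : Type*} [LinearOrder β] {f : ℝ → β}
    (hf : QuasiconcaveOn ℝ univ f) (x t : ℝ) {i j k : ℕ} (hij : i ≤ j) (hjk : j ≤ k) :
    min (f (x + i * t)) (f (x + k * t)) ≤ f (x + j * t) := by
  have hij' : (i : ℝ) ≤ j := by exact_mod_cast hij
  have hjk' : (j : ℝ) ≤ k := by exact_mod_cast hjk
  rcases le_total 0 t with ht | ht
  · exact hf.min_le_of_le_of_le (by gcongr) (by gcongr)
  · rw [min_comm]
    exact hf.min_le_of_le_of_le (by nlinarith) (by nlinarith)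

theorem QuasiconcaveOn.measurable {β : Type*} [LinearOrder β] [TopologicalSpace β]
    [OrderTopology β] [SecondCountableTopology β] [MeasurableSpace β] [BorelSpace β]
    {f : ℝ → β} (hf : QuasiconcaveOn ℝ univ f) : Measurable f :=
  measurable_of_Ici fun r ↦ by
    convert (convex_iff_ordConnected.1 (hf r)).measurableSet using 1
    ext x
    simp

theorem sum_range_succ_eq_sup'_add_sum_min {α : Type*} [LinearOrder α] [AddCommMonoid α]
    (a : ℕ → α) (ha : ∀ ⦃i j k⦄, i ≤ j → j ≤ k → min (a i) (a k) ≤ a j) (n : ℕ) :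
    ∑ i ∈ range (n + 1), a i
      = (range (n + 1)).sup' nonempty_range_add_one a + ∑ i ∈ range n, min (a i) (a (i + 1)) := by
  induction n with
  | zero => simp
  | succ n ih =>
    set S := (range (n + 1)).sup' nonempty_range_add_one a
    have hmin : min S (a (n + 1)) = min (a n) (a (n + 1)) := by
      obtain ⟨b, hb, hSb⟩ : ∃ b ∈ range (n + 1), S = a b := exists_mem_eq_sup' _ a
      refine le_antisymm (le_min ?_ (min_le_right _ _)) (min_le_min_right _ ?_)
      · rw [hSb]
        exact ha (Nat.lt_succ_iff.1 (mem_range.1 hb)) n.le_succ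
      · exact le_sup' a (self_mem_range_succ n)
    have hsup : (range (n + 1 + 1)).sup' nonempty_range_add_one a = max S (a (n + 1)) := by
      simp only [range_add_one (n := n + 1), sup'_insert nonempty_range_add_one, S]
      exact sup_comm _ _
    rw [sum_range_succ, ih, sum_range_succ, hsup, ← hmin, add_right_comm,
      ← min_add_max S (a (n + 1))]
    ac_rfl

theorem iSup_fin_eq_sup'_range {α : Type*} [CompleteLattice α] (a : ℕ → α) (n : ℕ) :
    ⨆ j : Fin (n + 1), a j = (range (n + 1)).sup' nonempty_range_add_one a := by
  rw [sup'_eq_sup, Finset.sup_eq_iSup]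
  exact le_antisymm (iSup_le fun j ↦ le_iSup₂_of_le (j : ℕ) (mem_range.2 j.isLt) le_rfl)
    (iSup₂_le fun i hi ↦ le_iSup_of_le ⟨i, mem_range.1 hi⟩ le_rfl)

section WithDensity

variable {α : Type*} [MeasurableSpace α] {μ : Measure α}

theorem withDensity_finsetSum {ι : Type*} (s : Finset ι) {g : ι → α → ℝ≥0∞}
    (hg : ∀ i ∈ s, Measurable (g i)) :
    μ.withDensity (fun x ↦ ∑ i ∈ s, g i x) = ∑ i ∈ s, μ.withDensity (g i) := by
  ext t ht
  simp only [Measure.finsetSum_apply, withDensity_apply _ ht]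
  exact lintegral_finsetSum _ hg

theorem lintegral_iSup_rnDeriv_sum_withDensity [SigmaFinite μ] {ι : Type*} [Fintype ι]
    {g : ι → α → ℝ≥0∞} (hg : ∀ i, Measurable (g i)) (hg_ne_top : ∀ i x, g i x ≠ ∞) :
    ∫⁻ x, ⨆ i, (μ.withDensity (g i)).rnDeriv (∑ j, μ.withDensity (g j)) x
        ∂(∑ j, μ.withDensity (g j))
      = ∫⁻ x, ⨆ i, g i x ∂μ := by
  set G := fun x ↦ ∑ j, g j x
  have hG : Measurable G := Finset.measurable_sum _ fun j _ ↦ hg j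
  have hG_ne_top : ∀ x, G x ≠ ∞ := fun x ↦ by
    simpa [G, ENNReal.sum_ne_top] using fun j ↦ hg_ne_top j x
  have hcancel : ∀ i x, G x * (g i x / G x) = g i x := fun i x ↦ by
    refine ENNReal.mul_div_cancel' (fun h0 ↦ ?_) (fun h ↦ absurd h (hG_ne_top x))
    have : g i x ≤ G x := by
      simpa [G] using Finset.single_le_sum (f := fun j ↦ g j x) (fun j _ ↦ zero_le) (mem_univ i)
    exact le_antisymm (h0 ▸ this) zero_le
  have : SigmaFinite (μ.withDensity G) := .withDensity_of_ne_top (ae_of_all _ hG_ne_top)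
  have hrn : ∀ i, (μ.withDensity (g i)).rnDeriv (μ.withDensity G)
      =ᵐ[μ.withDensity G] fun x ↦ g i x / G x := fun i ↦ by
    have hgi : Measurable fun x ↦ g i x / G x := (hg i).div hG
    have : μ.withDensity (g i) = (μ.withDensity G).withDensity fun x ↦ g i x / G x := by
      rw [← withDensity_mul _ hG hgi]
      exact congrArg _ (funext fun x ↦ (hcancel i x).symm)
    rw [this]
    exact Measure.rnDeriv_withDensity _ hgi
  rw [← withDensity_finsetSum univ fun j _ ↦ hg j]
  calc ∫⁻ x, ⨆ i, (μ.withDensity (g i)).rnDeriv (μ.withDensity G) x ∂(μ.withDensity G)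
      = ∫⁻ x, ⨆ i, g i x / G x ∂(μ.withDensity G) :=
        lintegral_congr_ae ((ae_all_iff.2 hrn).mono fun x hx ↦ iSup_congr hx)
    _ = ∫⁻ x, G x * ⨆ i, g i x / G x ∂μ :=
        lintegral_withDensity_eq_lintegral_mul _ hG (.iSup fun i ↦ (hg i).div hG)
    _ = ∫⁻ x, ⨆ i, g i x ∂μ := by simp_rw [ENNReal.mul_iSup, hcancel]

end WithDensity

theorem shiftLaw1_withDensity {g : ℝ → ℝ≥0∞} (hg : Measurable g) (u : ℝ) :
    shiftLaw1 (volume.withDensity g) u = volume.withDensity fun x ↦ g (x + u) := by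
  ext s hs
  rw [shiftLaw1, Measure.map_apply (measurable_sub_const u) hs,
    withDensity_apply _ (measurable_sub_const u hs), withDensity_apply _ hs,
    ← (measurePreserving_sub_right volume u).setLIntegral_comp_preimage
      (f := fun y ↦ g (y + u)) hs (hg.comp (measurable_add_const u))]
  simp only [sub_add_cancel]

theorem Hfun1_withDensity {g : ℝ → ℝ≥0∞} (hg : Measurable g) (hg_ne_top : ∀ x, g x ≠ ∞)
    (M : ℕ) (t : ℝ) :
    Hfun1 (volume.withDensity g) M t = ∫⁻ x, ⨆ j : Fin M, g (x + j * t) := by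
  simp only [Hfun1, mixMeasure1, shiftLaw1_withDensity hg]
  exact lintegral_iSup_rnDeriv_sum_withDensity (fun j ↦ hg.comp (measurable_add_const _))
    fun _ _ ↦ hg_ne_top _

section Unimodal

variable {g : ℝ → ℝ≥0∞} (hg : QuasiconcaveOn ℝ univ g) (hg_ne_top : ∀ x, g x ≠ ∞)
  (hg_one : ∫⁻ x, g x = 1)
include hg hg_ne_top hg_one

theorem Hfun1_add_mul_lintegral_min (n : ℕ) (t : ℝ) :
    Hfun1 (volume.withDensity g) (n + 1) t + n * ∫⁻ x, min (g x) (g (x + t)) = n + 1 := by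
  have hshift : ∀ c, Measurable fun x ↦ g (x + c) := fun c ↦
    hg.measurable.comp (measurable_add_const c)
  have hpoint : ∀ x, (⨆ j : Fin (n + 1), g (x + j * t))
      + ∑ i ∈ range n, min (g (x + i * t)) (g (x + (i + 1 : ℕ) * t))
      = ∑ i ∈ range (n + 1), g (x + i * t) := fun x ↦ by
    rw [iSup_fin_eq_sup'_range (fun j : ℕ ↦ g (x + j * t)),
      sum_range_succ_eq_sup'_add_sum_min _ (fun _ _ _ ↦ hg.min_le_add_mul x t)]
  have hmin : ∀ i : ℕ, ∫⁻ x, min (g (x + i * t)) (g (x + (i + 1 : ℕ) * t))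
      = ∫⁻ x, min (g x) (g (x + t)) := fun i ↦ by
    simp only [Nat.cast_succ, add_one_mul, ← add_assoc]
    exact lintegral_add_right_eq_self (fun y ↦ min (g y) (g (y + t))) (i * t)
  have hsup : Measurable fun x ↦ ⨆ j : Fin (n + 1), g (x + j * t) := .iSup fun j ↦ hshift _
  rw [Hfun1_withDensity hg.measurable hg_ne_top]
  calc (∫⁻ x, ⨆ j : Fin (n + 1), g (x + j * t)) + n * ∫⁻ x, min (g x) (g (x + t))
      = (∫⁻ x, ⨆ j : Fin (n + 1), g (x + j * t))
          + ∫⁻ x, ∑ i ∈ range n, min (g (x + i * t)) (g (x + (i + 1 : ℕ) * t)) := by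
        rw [lintegral_finsetSum _ fun i _ ↦ (hshift _).min (hshift _)]
        simp only [hmin, sum_const, card_range, nsmul_eq_mul]
    _ = ∫⁻ x, ∑ i ∈ range (n + 1), g (x + i * t) := by
        rw [← lintegral_add_left hsup]
        simp_rw [hpoint]
    _ = n + 1 := by
        rw [lintegral_finsetSum _ fun i _ ↦ hshift _]
        simp [lintegral_add_right_eq_self g, hg_one]

theorem Hfun1_ratio_eq_lintegral_min {M : ℕ} (hM : 2 ≤ M) (t : ℝ) :
    ((M : ℝ≥0∞) - Hfun1 (volume.withDensity g) M t) / ((M : ℝ≥0∞) - 1)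
      = ∫⁻ x, min (g x) (g (x + t)) := by
  obtain ⟨n, rfl⟩ : ∃ n, M = n + 1 := ⟨M - 1, by omega⟩
  have hn : (n : ℝ≥0∞) ≠ 0 := by exact_mod_cast (by omega : n ≠ 0)
  have hsum := Hfun1_add_mul_lintegral_min hg hg_ne_top hg_one n t
  have hH : Hfun1 (volume.withDensity g) (n + 1) t ≠ ∞ :=
    ne_top_of_le_ne_top (by simp) (hsum ▸ le_self_add)
  push_cast
  rw [ENNReal.sub_eq_of_eq_add_rev hH hsum.symm, ENNReal.add_sub_cancel_right one_ne_top,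
    mul_comm, ENNReal.mul_div_cancel_right hn (natCast_ne_top n)]

end Unimodal

/-- **For a unimodal input pdf, increasing the number of hypotheses `M` does not improve
the high-noise Ziv–Zakai functionals (Example, Section III-B).** -/
theorem unimodal_high_noise_M_eq_two
    (P : Measure ℝ) [IsProbabilityMeasure P]
    (f : ℝ → ℝ) (m : ℝ)
    (hP : P = volume.withDensity fun x => ENNReal.ofReal (f x))
    (hmono : MonotoneOn f (Set.Iic m)) (hanti : AntitoneOn f (Set.Ici m))
    (M : ℕ) (hM : 2 ≤ M) :
    Vbar1 P M = Vbar1 P 2 ∧ V1 P M = V1 P 2 := by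
  subst hP
  have hq : QuasiconcaveOn ℝ univ fun x ↦ ENNReal.ofReal (f x) :=
    (quasiconcaveOn_univ_of_monotoneOn_Iic_of_antitoneOn_Ici hmono hanti).monotone_comp
      (g := ENNReal.ofReal) ENNReal.ofReal_mono
  have hone : ∫⁻ x, ENNReal.ofReal (f x) = 1 := by
    have h := measure_univ (μ := volume.withDensity fun x ↦ ENNReal.ofReal (f x))
    rwa [withDensity_apply _ MeasurableSet.univ, Measure.restrict_univ] at h
  have hratio := fun N (hN : 2 ≤ N) ↦
    Hfun1_ratio_eq_lintegral_min hq (fun _ ↦ ofReal_ne_top) hone hN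
  simp only [Vbar1, V1, hratio M hM, hratio 2 le_rfl, and_self]

end
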